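/- arXiv:1303.3776 — 4 statements merged into one kernel-verified Lean document; each statement's English description precedes it below -/
import Mathlib

section
/- Let n and m be positive integers with 5 ≤ n ≤ 2m+1, and let C = (i_1,…,i_p) be a cycle of length p in the symmetric group S_n on {1,…,n}. If C belongs to L_m, i.e. for every term i_u of C there exists a term i_v of C with |i_u − i_v| > m, then C can be written as a product of p + 1 transpositions from G_m. -/
/-- A permutation of `Fin n` is a transposition `(i, j)` with `j - i ≤ m`
(an element of the set `G_m` of the paper). -/
def IsGmTransposition (n m : ℕ) (τ : Equiv.Perm (Fin n)) : Prop :=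
  ∃ i j : Fin n, i < j ∧ j.val - i.val ≤ m ∧ τ = Equiv.swap i j

/-- A cycle, given by the list of its terms, belongs to `L_m` if for each of its terms `x`
there is a term `y` with `|x - y| > m`. -/
def InLm (n m : ℕ) (L : List (Fin n)) : Prop :=
  ∀ x ∈ L, ∃ y ∈ L, (m : ℤ) < |(x.val : ℤ) - (y.val : ℤ)|

/-!
Since `n ≤ 2m + 1`, the middle point `c = m` (counting from `0`) is at distance at most `m` from
every point, so every transposition `(c x)` lies in `G_m`, and `c` is not a term of a cycle in
`L_m`. A cycle `(a b₁ … b_k)` avoiding `c` is the conjugate by `(a c)` of the star cycle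
`(c b₁ … b_k) = (c b_k) ⋯ (c b₁)`, which gives `k + 2 = p + 1` transpositions through `c`.
-/

namespace List

variable {α : Type*} [DecidableEq α]

theorem formPerm_map_perm (σ : Equiv.Perm α) :
    ∀ l : List α, (l.map σ).formPerm = σ * l.formPerm * σ⁻¹
  | [] => by simp
  | [x] => by simp
  | x :: y :: l => by
    rw [map_cons, map_cons, formPerm_cons_cons, ← map_cons, formPerm_map_perm σ (y :: l),
      formPerm_cons_cons, Equiv.swap_apply_apply]
    group

theorem formPerm_cons_eq_swap_mul_formPerm_cons_mul_swap {x y : α} {l : List α}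
    (hx : x ∉ l) (hy : y ∉ l) :
    (x :: l).formPerm = Equiv.swap x y * (y :: l).formPerm * Equiv.swap x y := by
  have hmap : (y :: l).map (Equiv.swap x y) = x :: l := by
    rw [map_cons, Equiv.swap_apply_right, map_congr_left (g := id), map_id]
    intro z hz
    exact Equiv.swap_apply_of_ne_of_ne (ne_of_mem_of_not_mem hz hx)
      (ne_of_mem_of_not_mem hz hy)
  rw [← hmap, formPerm_map_perm, Equiv.swap_inv]

theorem formPerm_cons_cons_eq_formPerm_cons_mul_swap {t b : α} {l : List α}
    (ht : t ∉ l) (hb : b ∉ l) :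
    (t :: b :: l).formPerm = (t :: l).formPerm * Equiv.swap t b := by
  rw [formPerm_cons_cons, formPerm_cons_eq_swap_mul_formPerm_cons_mul_swap hb ht,
    Equiv.swap_comm b t, ← mul_assoc, ← mul_assoc, Equiv.swap_mul_self, one_mul]

theorem formPerm_cons_eq_prod_reverse_map_swap (t : α) :
    ∀ {l : List α}, (t :: l).Nodup → (t :: l).formPerm = (l.map (Equiv.swap t)).reverse.prod
  | [], _ => by simp
  | b :: l, hnd => by
    have ht : t ∉ l := fun h => (nodup_cons.mp hnd).1 (mem_cons_of_mem b h)
    have hb : b ∉ l := (nodup_cons.mp (nodup_cons.mp hnd).2).1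
    have hnd' : (t :: l).Nodup := nodup_cons.mpr ⟨ht, (nodup_cons.mp (nodup_cons.mp hnd).2).2⟩
    rw [formPerm_cons_cons_eq_formPerm_cons_mul_swap ht hb,
      formPerm_cons_eq_prod_reverse_map_swap t hnd', map_cons, reverse_cons, prod_append,
      prod_singleton]

theorem exists_swap_factorization_formPerm {L : List α} {t : α} (hnd : L.Nodup) (hne : L ≠ [])
    (ht : t ∉ L) :
    ∃ l : List (Equiv.Perm α), l.length = L.length + 1 ∧
      (∀ τ ∈ l, ∃ x ∈ L, τ = Equiv.swap t x) ∧ l.prod = L.formPerm := by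
  obtain ⟨a, T, rfl⟩ := exists_cons_of_ne_nil hne
  have htT : t ∉ T := fun h => ht (mem_cons_of_mem a h)
  refine ⟨Equiv.swap t a :: ((T.map (Equiv.swap t)).reverse ++ [Equiv.swap t a]), by simp,
    ?_, ?_⟩
  · intro τ hτ
    simp only [mem_cons, mem_append, mem_reverse, mem_map, not_mem_nil, or_false] at hτ
    rcases hτ with rfl | ⟨x, hx, rfl⟩ | rfl
    · exact ⟨a, mem_cons_self, rfl⟩
    · exact ⟨x, mem_cons_of_mem a hx, rfl⟩
    · exact ⟨a, mem_cons_self, rfl⟩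
  · rw [formPerm_cons_eq_swap_mul_formPerm_cons_mul_swap (nodup_cons.mp hnd).1 htT,
      formPerm_cons_eq_prod_reverse_map_swap t (nodup_cons.mpr ⟨htT, (nodup_cons.mp hnd).2⟩),
      prod_cons, prod_append, prod_singleton, Equiv.swap_comm a t, mul_assoc]

end List

theorem isGmTransposition_swap {n m : ℕ} {x y : Fin n} (hxy : x ≠ y)
    (hdist : |(x.val : ℤ) - y.val| ≤ m) : IsGmTransposition n m (Equiv.swap x y) := by
  rcases lt_or_gt_of_ne hxy with h | h
  · exact ⟨x, y, h, by rw [abs_le] at hdist; omega, rfl⟩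
  · exact ⟨y, x, h, by rw [abs_le] at hdist; omega, Equiv.swap_comm x y⟩

theorem abs_sub_middle_le {n m : ℕ} (hn : n ≤ 2 * m + 1) (x : Fin n) :
    |(m : ℤ) - x.val| ≤ m := by
  have := x.isLt
  rw [abs_le]
  omega

theorem InLm.lt_of_ne_nil {n m : ℕ} {L : List (Fin n)} (hLm : InLm n m L) (hne : L ≠ []) : m < n := by
  obtain ⟨x, hx⟩ := List.exists_mem_of_ne_nil L hne
  obtain ⟨y, -, hdist⟩ := hLm x hx
  have := x.isLt
  have := y.isLt
  rw [lt_abs] at hdist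
  omega

theorem cycle_in_Lm_factorization_general (n m : ℕ) (hn : n ≤ 2 * m + 1)
    (L : List (Fin n)) (hnd : L.Nodup) (hne : L ≠ []) (hLm : InLm n m L) :
    ∃ l : List (Equiv.Perm (Fin n)),
      l.length = L.length + 1 ∧ (∀ τ ∈ l, IsGmTransposition n m τ) ∧ l.prod = L.formPerm := by
  set c : Fin n := ⟨m, hLm.lt_of_ne_nil hne⟩
  have hc : c ∉ L := fun hcL => by
    obtain ⟨y, -, hdist⟩ := hLm c hcL
    exact (abs_sub_middle_le hn y).not_gt hdist
  obtain ⟨l, hlen, hswap, hprod⟩ := List.exists_swap_factorization_formPerm hnd hne hc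
  refine ⟨l, hlen, fun τ hτ => ?_, hprod⟩
  obtain ⟨x, hx, rfl⟩ := hswap τ hτ
  exact isGmTransposition_swap (ne_of_mem_of_not_mem hx hc).symm (abs_sub_middle_le hn x)

/-- Let `5 ≤ n ≤ 2m + 1` and let `C = (i_1, …, i_p)` be a cycle in `S_n` (given by the
nonempty list `L` of its distinct terms, of length `p`).  If `C ∈ L_m`, then `C` can be
written as a product of `p + 1` transpositions from `G_m`. -/
theorem cycle_in_Lm_factorization (n m : ℕ) (hm : 0 < m) (h5 : 5 ≤ n) (hn : n ≤ 2 * m + 1)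
    (L : List (Fin n)) (hnd : L.Nodup) (hne : L ≠ []) (hLm : InLm n m L) :
    ∃ l : List (Equiv.Perm (Fin n)),
      l.length = L.length + 1 ∧ (∀ τ ∈ l, IsGmTransposition n m τ) ∧ l.prod = L.formPerm :=
  cycle_in_Lm_factorization_general n m hn L hnd hne hLm
end

section
/- Let n and m be positive integers with 5 ≤ n ≤ 2m+1, and let C = (i_1,…,i_p) be a cycle of length p ≥ 2 in the symmetric group S_n on {1,…,n}. If C does not belong to L_m, i.e. there exists an index r with 1 ≤ r ≤ p such that |i_t − i_r| ≤ m for all t = 1,…,p, then C can be written as a product of p − 1 transpositions from G_m. -/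
/-!
A cycle `(z a₁ … aₖ)` is the star product `(z aₖ) ⋯ (z a₂)(z a₁)` of the `k` transpositions
joining its term `z` to the others. When every term lies within distance `m` of `z`, each of
these transpositions belongs to `G_m`.
-/

namespace List

variable {α : Type*} [DecidableEq α]

theorem formPerm_cons_concat {z a : α} {l : List α} (ha : a ∉ z :: l) :
    formPerm (z :: (l ++ [a])) = Equiv.swap z a * formPerm (z :: l) := by
  cases l using List.reverseRecOn with
  | nil => simp
  | append_singleton l b =>
    have hfix : formPerm (z :: (l ++ [b])) a = a := formPerm_apply_of_notMem ha
    rw [show z :: (l ++ [b] ++ [a]) = z :: l ++ [b, a] by simp, formPerm_append_pair,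
      Equiv.mul_swap_eq_swap_mul, cons_append, formPerm_cons_concat_apply_last, hfix]

theorem formPerm_cons_eq_prod_map_swap {z : α} {l : List α} (h : (z :: l).Nodup) :
    formPerm (z :: l) = (l.reverse.map (Equiv.swap z)).prod := by
  induction l using List.reverseRecOn with
  | nil => simp
  | append_singleton l a ih =>
    rw [← cons_append, nodup_append] at h
    have ha : a ∉ z :: l := fun ha => h.2.2 a ha a (mem_singleton_self a) rfl
    rw [formPerm_cons_concat ha, ih h.1]
    simp

end List

theorem isGmTransposition_swap_s10 {n m : ℕ} {a b : Fin n} (hab : a ≠ b)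
    (hdist : |(a.val : ℤ) - b.val| ≤ m) : IsGmTransposition n m (Equiv.swap a b) := by
  rw [abs_le] at hdist
  rcases lt_or_gt_of_ne hab with hlt | hlt
  · exact ⟨a, b, hlt, by omega, rfl⟩
  · exact ⟨b, a, hlt, by omega, Equiv.swap_comm a b⟩

theorem cycle_not_in_Lm_factorization_general (n m : ℕ) (L : List (Fin n)) (hnd : L.Nodup)
    (hnotLm : ∃ z ∈ L, ∀ x ∈ L, |(x.val : ℤ) - (z.val : ℤ)| ≤ m) :
    ∃ l : List (Equiv.Perm (Fin n)),
      l.length = L.length - 1 ∧ (∀ τ ∈ l, IsGmTransposition n m τ) ∧ l.prod = L.formPerm := by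
  obtain ⟨z, hzL, hz⟩ := hnotLm
  obtain ⟨l₁, l₂, rfl⟩ := List.append_of_mem hzL
  have hrot : l₁ ++ z :: l₂ ~r z :: (l₂ ++ l₁) := List.isRotated_append
  have hnd' : (z :: (l₂ ++ l₁)).Nodup := hrot.nodup_iff.mp hnd
  refine ⟨(l₂ ++ l₁).reverse.map (Equiv.swap z), by simp, ?_, ?_⟩
  · simp only [List.mem_map, List.mem_reverse]
    rintro _ ⟨a, ha, rfl⟩
    have haz : z ≠ a := fun h => (List.nodup_cons.mp hnd').1 (h ▸ ha)
    have hdist := hz a (hrot.mem_iff.mpr (List.mem_cons_of_mem z ha))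
    exact isGmTransposition_swap_s10 haz (by rwa [abs_sub_comm])
  · rw [List.formPerm_eq_of_isRotated hnd hrot, List.formPerm_cons_eq_prod_map_swap hnd']

/-- Let `5 ≤ n ≤ 2m + 1` and let `C = (i_1, …, i_p)` be a cycle in `S_n` of length `p ≥ 2`
(given by the list `L` of its distinct terms).  If `C ∉ L_m`, i.e. there is a term `z` of
`C` with `|x - z| ≤ m` for every term `x` of `C`, then `C` can be written as a product of
`p - 1` transpositions from `G_m`. -/
theorem cycle_not_in_Lm_factorization (n m : ℕ) (hm : 0 < m) (h5 : 5 ≤ n)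
    (hn : n ≤ 2 * m + 1) (L : List (Fin n)) (hnd : L.Nodup) (hlen : 2 ≤ L.length)
    (hnotLm : ∃ z ∈ L, ∀ x ∈ L, |(x.val : ℤ) - (z.val : ℤ)| ≤ m) :
    ∃ l : List (Equiv.Perm (Fin n)),
      l.length = L.length - 1 ∧ (∀ τ ∈ l, IsGmTransposition n m τ) ∧ l.prod = L.formPerm :=
  cycle_not_in_Lm_factorization_general n m L hnd hnotLm
end

section
/- Let n and m be integers with n ≥ 5 and 1 ≤ m ≤ n − 4. Then δ(n,m) ≤ ⌈(n−1)/m⌉ + δ(n−1,m). -/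
/-- `d(1, σ, m)`: the minimum number of transpositions from `G_m` whose product is `σ`. -/
noncomputable def permDist (n m : ℕ) (σ : Equiv.Perm (Fin n)) : ℕ :=
  sInf {k | ∃ l : List (Equiv.Perm (Fin n)),
    l.length = k ∧ (∀ τ ∈ l, IsGmTransposition n m τ) ∧ l.prod = σ}

/-- `δ(n, m)`: the maximum of `d(1, σ, m)` over all `σ ∈ S_n`. -/
noncomputable def permDelta (n m : ℕ) : ℕ :=
  Finset.univ.sup (fun σ : Equiv.Perm (Fin n) => permDist n m σ)

/-!
Let `j = σ⁻¹ 0`. Walking from `0` to `j` in steps of length at most `m` gives a product `ρ`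
of `⌈j/m⌉ ≤ ⌈(n-1)/m⌉` transpositions of `G_m` with `ρ 0 = j`. Then `σρ` fixes `0`, so it is
a permutation of the remaining `n - 1` points, with its `G_m`-distance bounded by `δ(n-1, m)`,
and `σ = (σρ) ρ⁻¹`.
-/

open Equiv

section permDist

variable {n m : ℕ}

lemma IsGmTransposition.inv {τ : Perm (Fin n)} (h : IsGmTransposition n m τ) :
    IsGmTransposition n m τ⁻¹ := by
  obtain ⟨i, j, hij, hji, rfl⟩ := h
  exact ⟨i, j, hij, hji, swap_inv i j⟩

lemma permDist_le_length (l : List (Perm (Fin n))) (hl : ∀ τ ∈ l, IsGmTransposition n m τ) :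
    permDist n m l.prod ≤ l.length :=
  Nat.sInf_le ⟨l, rfl, hl, rfl⟩

lemma permDist_one : permDist n m 1 = 0 :=
  Nat.le_zero.mp (permDist_le_length [] (by simp))

lemma IsGmTransposition.permDist_le_one {τ : Perm (Fin n)} (h : IsGmTransposition n m τ) :
    permDist n m τ ≤ 1 := by
  simpa using permDist_le_length [τ] (by simpa using h)

lemma exists_isGmTransposition_list_prod_eq (hm : 0 < m) (σ : Perm (Fin n)) :
    ∃ l : List (Perm (Fin n)), (∀ τ ∈ l, IsGmTransposition n m τ) ∧ l.prod = σ := by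
  rcases n with _ | K
  · exact ⟨[], by simp, Subsingleton.elim _ _⟩
  have hσ : σ ∈ Submonoid.closure (Set.range fun i : Fin K => swap i.castSucc i.succ) := by
    rw [Perm.mclosure_swap_castSucc_succ K]
    trivial
  obtain ⟨l, hl, hprod⟩ := Submonoid.exists_list_of_mem_closure hσ
  refine ⟨l, fun τ hτ => ?_, hprod⟩
  obtain ⟨i, rfl⟩ := hl τ hτ
  exact ⟨i.castSucc, i.succ, Fin.castSucc_lt_succ, by simpa using Nat.succ_le_of_lt hm, rfl⟩

lemma exists_list_length_eq_permDist (hm : 0 < m) (σ : Perm (Fin n)) :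
    ∃ l : List (Perm (Fin n)), l.length = permDist n m σ ∧
      (∀ τ ∈ l, IsGmTransposition n m τ) ∧ l.prod = σ := by
  obtain ⟨l, hl, hprod⟩ := exists_isGmTransposition_list_prod_eq hm σ
  exact Nat.sInf_mem (s := {k | ∃ l : List (Perm (Fin n)),
    l.length = k ∧ (∀ τ ∈ l, IsGmTransposition n m τ) ∧ l.prod = σ}) ⟨l.length, l, rfl, hl, hprod⟩

lemma permDist_mul_le (hm : 0 < m) (σ τ : Perm (Fin n)) :
    permDist n m (σ * τ) ≤ permDist n m σ + permDist n m τ := by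
  obtain ⟨l₁, hlen₁, hl₁, rfl⟩ := exists_list_length_eq_permDist hm σ
  obtain ⟨l₂, hlen₂, hl₂, rfl⟩ := exists_list_length_eq_permDist hm τ
  rw [← hlen₁, ← hlen₂, ← List.length_append, ← List.prod_append]
  exact permDist_le_length _ (List.forall_mem_append.mpr ⟨hl₁, hl₂⟩)

lemma permDist_inv_le (hm : 0 < m) (σ : Perm (Fin n)) :
    permDist n m σ⁻¹ ≤ permDist n m σ := by
  obtain ⟨l, hlen, hl, rfl⟩ := exists_list_length_eq_permDist hm σ
  rw [← hlen, List.prod_inv_reverse, ← List.length_map (f := fun x => x⁻¹), ← List.length_reverse]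
  refine permDist_le_length _ fun τ hτ => ?_
  obtain ⟨ρ, hρ, rfl⟩ := List.mem_map.mp (List.mem_reverse.mp hτ)
  exact (hl ρ hρ).inv

lemma permDist_le_permDelta (σ : Perm (Fin n)) : permDist n m σ ≤ permDelta n m :=
  Finset.le_sup (Finset.mem_univ σ)

end permDist

section liftSucc

variable {N m : ℕ}

/-- A permutation of `Fin N` acting on the last `N` points of `Fin (N + 1)`, fixing `0`. -/
def liftSucc : Perm (Fin N) →* Perm (Fin (N + 1)) where
  toFun e := Perm.decomposeFin.symm (0, e)
  map_one' := by simp [Perm.one_def]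
  map_mul' e f := by
    ext x
    refine Fin.cases ?_ (fun i => ?_) x <;>
      simp [Perm.decomposeFin_symm_apply_zero, Perm.decomposeFin_symm_apply_succ]

lemma liftSucc_swap (i j : Fin N) : liftSucc (swap i j) = swap i.succ j.succ := by
  ext x
  refine Fin.cases ?_ (fun k => ?_) x
  · rw [swap_apply_of_ne_of_ne (Fin.succ_ne_zero i).symm (Fin.succ_ne_zero j).symm]
    simp [liftSucc]
  · rw [(Fin.succ_injective N).swap_apply]
    simp [liftSucc, Perm.decomposeFin_symm_apply_succ]

lemma IsGmTransposition.liftSucc {τ : Perm (Fin N)} (h : IsGmTransposition N m τ) :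
    IsGmTransposition (N + 1) m (liftSucc τ) := by
  obtain ⟨i, j, hij, hji, rfl⟩ := h
  exact ⟨i.succ, j.succ, Fin.succ_lt_succ_iff.mpr hij, by simpa using hji, liftSucc_swap i j⟩

lemma exists_liftSucc_eq {π : Perm (Fin (N + 1))} (hπ : π 0 = 0) : ∃ e, liftSucc e = π := by
  obtain ⟨⟨p, e⟩, hpe⟩ := Perm.decomposeFin.symm.surjective π
  obtain rfl : p = 0 := by rw [← hπ, ← hpe, Perm.decomposeFin_symm_apply_zero]
  exact ⟨e, hpe⟩

lemma permDist_liftSucc_le (hm : 0 < m) (e : Perm (Fin N)) :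
    permDist (N + 1) m (liftSucc e) ≤ permDist N m e := by
  obtain ⟨l, hlen, hl, rfl⟩ := exists_list_length_eq_permDist hm e
  rw [← hlen, MonoidHom.map_list_prod, ← List.length_map (f := liftSucc)]
  exact permDist_le_length _ (by simpa using fun τ hτ => (hl τ hτ).liftSucc)

end liftSucc

lemma exists_permDist_le_apply_zero_eq {N m : ℕ} (hm : 0 < m) (k : ℕ) (j : Fin (N + 1))
    (hj : j.val ≤ k * m) : ∃ ρ : Perm (Fin (N + 1)), permDist (N + 1) m ρ ≤ k ∧ ρ 0 = j := by
  induction k generalizing j with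
  | zero => exact ⟨1, by simp [permDist_one], by ext; simp; omega⟩
  | succ k ih =>
    by_cases hj0 : j = 0
    · exact ⟨1, by simp [permDist_one], by simp [hj0]⟩
    have hj0' : j.val ≠ 0 := Fin.val_ne_iff.mpr hj0
    rw [add_one_mul] at hj
    -- truncated subtraction: `i = 0` when `j < m`
    let i : Fin (N + 1) := ⟨j - m, by omega⟩
    obtain ⟨ρ, hρ, hρ0⟩ := ih i (by simp only [i]; omega)
    have hswap : IsGmTransposition (N + 1) m (swap i j) :=
      ⟨i, j, by simp only [i, Fin.lt_def]; omega, by simp only [i]; omega, rfl⟩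
    refine ⟨swap i j * ρ, ?_, by simp [hρ0]⟩
    calc permDist (N + 1) m (swap i j * ρ)
        ≤ permDist (N + 1) m (swap i j) + permDist (N + 1) m ρ := permDist_mul_le hm _ _
      _ ≤ k + 1 := by linarith [hswap.permDist_le_one]

lemma permDist_le_ceil_add_permDelta {N m : ℕ} (hm : 0 < m) (σ : Perm (Fin (N + 1))) :
    permDist (N + 1) m σ ≤ (N + m - 1) / m + permDelta N m := by
  have hceil : N ≤ (N + m - 1) / m * m := by
    have := Nat.lt_div_mul_add (a := N + m - 1) hm
    omega
  obtain ⟨ρ, hρ, hρ0⟩ :=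
    exists_permDist_le_apply_zero_eq hm _ (σ⁻¹ 0) ((σ⁻¹ 0).is_le.trans hceil)
  obtain ⟨e, he⟩ := exists_liftSucc_eq (π := σ * ρ) (by simp [hρ0])
  calc permDist (N + 1) m σ = permDist (N + 1) m (liftSucc e * ρ⁻¹) := by
        rw [he, mul_inv_cancel_right]
    _ ≤ permDist (N + 1) m (liftSucc e) + permDist (N + 1) m ρ⁻¹ := permDist_mul_le hm _ _
    _ ≤ permDelta N m + (N + m - 1) / m :=
        add_le_add ((permDist_liftSucc_le hm e).trans (permDist_le_permDelta e))
          ((permDist_inv_le hm ρ).trans hρ)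
    _ = (N + m - 1) / m + permDelta N m := add_comm _ _

lemma permDelta_succ_le {N m : ℕ} (hm : 0 < m) :
    permDelta (N + 1) m ≤ (N + m - 1) / m + permDelta N m :=
  Finset.sup_le fun σ _ => permDist_le_ceil_add_permDelta hm σ

theorem delta_le_recursive_one_general (n m : ℕ) (h5 : 5 ≤ n) (hm : 1 ≤ m) :
    permDelta n m ≤ (n - 1 + m - 1) / m + permDelta (n - 1) m := by
  obtain ⟨N, rfl⟩ : ∃ N, n = N + 1 := ⟨n - 1, by omega⟩
  exact permDelta_succ_le hm

/-- For `n ≥ 5` and `1 ≤ m ≤ n - 4`:  `δ(n, m) ≤ ⌈(n-1)/m⌉ + δ(n-1, m)`.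
(Here `⌈(n-1)/m⌉` is written as `(n - 1 + m - 1) / m` in natural-number arithmetic.) -/
theorem delta_le_recursive_one (n m : ℕ) (h5 : 5 ≤ n) (hm : 1 ≤ m) (hmn : m ≤ n - 4) :
    permDelta n m ≤ (n - 1 + m - 1) / m + permDelta (n - 1) m :=
  delta_le_recursive_one_general n m h5 hm
end

section
/- Let n and m be positive integers with 5 ≤ n ≤ 2m+1. Let C_i and C_j be disjoint cycles in S_n both belonging to L_m, let u_i be the smallest term of C_i and v_j the largest term of C_j. If |v_j − u_i| ≤ m, then C_i and C_j satisfy condition (rs): there exist a term r of C_i and a term s of C_j such that every term of C_i is within distance m of s and every term of C_j is within distance m of r. -/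
/-!
The witnesses are `r = u` and `s = v`. The term of `C_i` far from its minimum `u` lies above
`u + m`, so `u + m < n - 1`; the term of `C_j` far from its maximum `v` lies below `v - m`, so
`m < v`. With `n ≤ 2m + 1` this puts `u` below `m` and `v` above `n - 1 - m`, and together with
`|v - u| ≤ m` every term of `C_i` (in `[u, n - 1]`) is within `m` of `v` and every term of `C_j`
(in `[0, v]`) is within `m` of `u`.
-/

namespace InLm

variable {n m : ℕ} {L : List (Fin n)}

theorem val_add_lt_of_forall_le (hL : InLm n m L) {u : Fin n} (hu : u ∈ L)
    (hmin : ∀ x ∈ L, u ≤ x) : u.val + m + 1 < n := by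
  obtain ⟨y, hy, hfar⟩ := hL u hu
  have huy : u.val ≤ y.val := hmin y hy
  have hyn := y.isLt
  rw [lt_abs] at hfar
  omega

theorem lt_val_of_forall_le (hL : InLm n m L) {v : Fin n} (hv : v ∈ L)
    (hmax : ∀ y ∈ L, y ≤ v) : m < v.val := by
  obtain ⟨y, hy, hfar⟩ := hL v hv
  have hyv : y.val ≤ v.val := hmax y hy
  rw [lt_abs] at hfar
  omega

end InLm

theorem condRS_of_min_max_close_general (n m : ℕ) (hn : n ≤ 2 * m + 1)
    (L1 L2 : List (Fin n))
    (hLm1 : InLm n m L1) (hLm2 : InLm n m L2)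
    (u v : Fin n) (hu : u ∈ L1) (humin : ∀ x ∈ L1, u ≤ x)
    (hv : v ∈ L2) (hvmax : ∀ y ∈ L2, y ≤ v)
    (hclose : |(v.val : ℤ) - (u.val : ℤ)| ≤ m) :
    ∃ r ∈ L1, ∃ s ∈ L2,
      (∀ x ∈ L1, |(x.val : ℤ) - (s.val : ℤ)| ≤ m) ∧
      (∀ y ∈ L2, |(y.val : ℤ) - (r.val : ℤ)| ≤ m) := by
  have hu_low := hLm1.val_add_lt_of_forall_le hu humin
  have hv_high := hLm2.lt_val_of_forall_le hv hvmax
  rw [abs_sub_le_iff] at hclose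
  refine ⟨u, hu, v, hv, fun x hx => ?_, fun y hy => ?_⟩
  · have hux : u.val ≤ x.val := humin x hx
    have hxn := x.isLt
    rw [abs_sub_le_iff]
    omega
  · have hyv : y.val ≤ v.val := hvmax y hy
    rw [abs_sub_le_iff]
    omega

/-- Let `5 ≤ n ≤ 2m + 1` and let `C_i`, `C_j` be disjoint cycles in `S_n` (given by
disjoint nonempty lists `L1`, `L2` of distinct terms), both belonging to `L_m`.  Let `u`
be the smallest term of `C_i` and `v` the largest term of `C_j`.  If `|v - u| ≤ m`, then
`C_i` and `C_j` satisfy condition (rs): there are a term `r` of `C_i` and a term `s` of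
`C_j` such that every term of `C_i` is within distance `m` of `s` and every term of `C_j`
is within distance `m` of `r`. -/
theorem condRS_of_min_max_close (n m : ℕ) (hm : 0 < m) (h5 : 5 ≤ n) (hn : n ≤ 2 * m + 1)
    (L1 L2 : List (Fin n)) (hnd1 : L1.Nodup) (hnd2 : L2.Nodup)
    (hne1 : L1 ≠ []) (hne2 : L2 ≠ []) (hdisj : ∀ x ∈ L1, x ∉ L2)
    (hLm1 : InLm n m L1) (hLm2 : InLm n m L2)
    (u v : Fin n) (hu : u ∈ L1) (humin : ∀ x ∈ L1, u ≤ x)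
    (hv : v ∈ L2) (hvmax : ∀ y ∈ L2, y ≤ v)
    (hclose : |(v.val : ℤ) - (u.val : ℤ)| ≤ m) :
    ∃ r ∈ L1, ∃ s ∈ L2,
      (∀ x ∈ L1, |(x.val : ℤ) - (s.val : ℤ)| ≤ m) ∧
      (∀ y ∈ L2, |(y.val : ℤ) - (r.val : ℤ)| ≤ m) :=
  condRS_of_min_max_close_general n m hn L1 L2 hLm1 hLm2 u v hu humin hv hvmax hclose
end
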